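/- (Corollary 3.4) Let L ≥ 1 and let (a_j, b_j, T_j), j = 1, …, L, be a 4-chained family of parameter triples, write G_j = G_{a_j,b_j,T_j}, and let σ_j ∈ {−1, +1}, j = 1, …, L, be arbitrary signs. Then for every integer K ≥ 1 there exist an integer m ≥ K and real numbers α < β with [α, β] ⊆ [s_{m−1}(b_L,T_L), s_m(b_L,T_L)] such that for every j ∈ {1, …, L} and every χ ∈ [α, β]: σ_j·G_j(χ) ≤ −(1/2)·a_L·T_L·b_L^{m−1} < 0. -/

import Mathlib

/-!
Since `b_j = b_{j+1}⁴` and `T_j = (1 + b_{j+1} + b_{j+1}² + b_{j+1}³) T_{j+1}`, segment `n` of `G_j`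
is exactly the union of segments `4n, …, 4n+3` of `G_{j+1}`, and on segment `n` each `G` equals
`±(a T bⁿ) sin(phase)`, with sign `(-1)ⁿ`. Descending from the coarsest level, choose in each
level one of the two middle subsegments `4n+1`, `4n+2`, the one whose sign is `-σ_j`. On the
middle half of the finest chosen segment, each coarser segment extends past it on both sides by at
least a whole neighbouring subsegment, so every phase stays a fixed fraction of `π` away from `0`
and `π`, and Jordan's inequality `sin x ≥ 2x/π` gives `|G_j| ≥ a_L T_L b_L^(m-1) / 2`.
-/

open Real Filter Set

/-- Breakpoints `s_n(b,T) = T·π·(b^n − 1)/(b − 1)`. -/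
noncomputable def brk (b T : ℝ) (n : ℕ) : ℝ := T * Real.pi * (b ^ n - 1) / (b - 1)

/-- Index of the segment containing `x ≥ 0`: the unique `m` with `s_m ≤ x < s_{m+1}`
(for `b > 1`, `T > 0`). -/
noncomputable def seg (b T x : ℝ) : ℕ := sInf {n : ℕ | x < brk b T (n + 1)}

/-- The saturated Nussbaum function `N_{a,b,T}`: on `[s_{n−1}, s_n)` (with `m = n − 1`)
it equals `(−1)^m·a·cos((χ − s_m)/(b^m·T))`, extended evenly to `χ < 0`. -/
noncomputable def satN (a b T : ℝ) (χ : ℝ) : ℝ :=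
  (-1 : ℝ) ^ (seg b T |χ|) * a *
    Real.cos ((|χ| - brk b T (seg b T |χ|)) / (b ^ (seg b T |χ|) * T))

/-- The integrated function `G_{a,b,T}(χ) = ∫_0^χ N_{a,b,T}(τ) dτ`. -/
noncomputable def satG (a b T : ℝ) (χ : ℝ) : ℝ := ∫ τ in (0:ℝ)..χ, satN a b T τ

/-- A family of triples `(a_j, b_j, T_j)`, `j = 1, …, L`, is 4-chained. -/
def Chained4Family (L : ℕ) (a b T : ℕ → ℝ) : Prop :=
  0 < a L ∧ 1 < b L ∧ 0 < T L ∧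
    ∀ j, 1 ≤ j → j < L →
      b j = (b (j + 1)) ^ 4 ∧
      a j = ((b (j + 1)) ^ 3 / (1 + b (j + 1) + (b (j + 1)) ^ 2 + (b (j + 1)) ^ 3)) * a (j + 1) ∧
      T j = (1 + b (j + 1) + (b (j + 1)) ^ 2 + (b (j + 1)) ^ 3) * T (j + 1)

open MeasureTheory
open scoped Interval

section Breakpoints

variable {b T : ℝ}

lemma brk_zero : brk b T 0 = 0 := by simp [brk]

lemma brk_succ_sub (hb : b ≠ 1) (T : ℝ) (n : ℕ) :
    brk b T (n + 1) - brk b T n = T * π * b ^ n := by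
  rw [brk, brk, ← sub_div, div_eq_iff (sub_ne_zero.2 hb)]
  ring

lemma brk_strictMono (hb : 1 < b) (hT : 0 < T) : StrictMono (brk b T) :=
  strictMono_nat_of_lt_succ fun n => by
    linarith [brk_succ_sub hb.ne' T n, show 0 < T * π * b ^ n by positivity]

lemma brk_nonneg (hb : 1 < b) (hT : 0 < T) (n : ℕ) : 0 ≤ brk b T n :=
  brk_zero ▸ (brk_strictMono hb hT).monotone n.zero_le

lemma brk_pow_four (hb : 1 < b) (T : ℝ) (n : ℕ) :
    brk (b ^ 4) ((1 + b + b ^ 2 + b ^ 3) * T) n = brk b T (4 * n) := by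
  have : b ^ 4 - 1 ≠ 0 := by linarith [one_lt_pow₀ hb (n := 4) (by norm_num)]
  have : b - 1 ≠ 0 := by linarith
  rw [brk, brk, pow_mul]
  field_simp
  ring

lemma seg_eq (hb : 1 < b) (hT : 0 < T) {n : ℕ} {x : ℝ}
    (h1 : brk b T n ≤ x) (h2 : x < brk b T (n + 1)) : seg b T x = n := by
  refine le_antisymm (Nat.sInf_le h2) (le_csInf ⟨n, h2⟩ fun k hk => ?_)
  by_contra! hkn
  have : brk b T (k + 1) ≤ brk b T n := (brk_strictMono hb hT).monotone hkn
  exact (lt_irrefl x) (hk.trans_le (this.trans h1))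

end Breakpoints

section SegmentFormula

variable {a b T : ℝ} {n : ℕ}

lemma satN_eq (hb : 1 < b) (hT : 0 < T) {x : ℝ}
    (h1 : brk b T n ≤ x) (h2 : x < brk b T (n + 1)) :
    satN a b T x = (-1) ^ n * a * cos ((x - brk b T n) / (b ^ n * T)) := by
  rw [satN, abs_of_nonneg ((brk_nonneg hb hT n).trans h1), seg_eq hb hT h1 h2]

lemma satN_ae_eq (hb : 1 < b) (hT : 0 < T) {x y : ℝ}
    (hx : brk b T n ≤ x) (hxy : x ≤ y) (hy : y ≤ brk b T (n + 1)) :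
    ∀ᵐ τ, τ ∈ Ι x y →
      satN a b T τ = (-1) ^ n * a * cos ((τ - brk b T n) / (b ^ n * T)) := by
  filter_upwards [volume.ae_ne (brk b T (n + 1))] with τ hτne hτ
  rw [uIoc_of_le hxy] at hτ
  exact satN_eq hb hT (hx.trans hτ.1.le) ((hτ.2.trans hy).lt_of_ne hτne)

lemma intervalIntegrable_satN (hb : 1 < b) (hT : 0 < T) {x y : ℝ}
    (hx : brk b T n ≤ x) (hxy : x ≤ y) (hy : y ≤ brk b T (n + 1)) :
    IntervalIntegrable (satN a b T) volume x y := by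
  have hcont : Continuous fun τ => (-1) ^ n * a * cos ((τ - brk b T n) / (b ^ n * T)) := by
    fun_prop
  refine (hcont.intervalIntegrable x y).congr_ae ?_
  filter_upwards [(ae_restrict_iff' measurableSet_uIoc).2 (satN_ae_eq hb hT hx hxy hy)] with τ hτ
  exact hτ.symm

lemma integral_satN_segment (hb : 1 < b) (hT : 0 < T) {x : ℝ}
    (hx : brk b T n ≤ x) (hx' : x ≤ brk b T (n + 1)) :
    ∫ τ in brk b T n..x, satN a b T τ =
      (-1) ^ n * a * (b ^ n * T) * sin ((x - brk b T n) / (b ^ n * T)) := by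
  set c := b ^ n * T
  have hc : c ≠ 0 := by positivity
  rw [intervalIntegral.integral_congr_ae (satN_ae_eq hb hT le_rfl hx hx'),
    intervalIntegral.integral_eq_sub_of_hasDerivAt
      (f := fun τ => (-1) ^ n * a * c * sin ((τ - brk b T n) / c))
      (fun τ _ => ?_) (Continuous.intervalIntegrable (by fun_prop) _ _)]
  · simp
  · refine ((((hasDerivAt_id τ).sub_const (brk b T n)).div_const c).sin.const_mul
      ((-1) ^ n * a * c)).congr_deriv ?_
    simp only [id, c]
    field_simp

lemma intervalIntegrable_satN_zero_brk (hb : 1 < b) (hT : 0 < T) (n : ℕ) :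
    IntervalIntegrable (satN a b T) volume 0 (brk b T n) := by
  induction n with
  | zero => rw [brk_zero]
  | succ k ih =>
    exact ih.trans (intervalIntegrable_satN hb hT le_rfl
      (brk_strictMono hb hT k.lt_succ_self).le le_rfl)

lemma satG_split (hb : 1 < b) (hT : 0 < T) {x : ℝ}
    (hx : brk b T n ≤ x) (hx' : x ≤ brk b T (n + 1)) :
    satG a b T x = satG a b T (brk b T n) + ∫ τ in brk b T n..x, satN a b T τ :=
  (intervalIntegral.integral_add_adjacent_intervals (intervalIntegrable_satN_zero_brk hb hT n)
    (intervalIntegrable_satN hb hT le_rfl hx hx')).symm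

lemma satG_brk (hb : 1 < b) (hT : 0 < T) (n : ℕ) : satG a b T (brk b T n) = 0 := by
  induction n with
  | zero => simp [satG, brk_zero]
  | succ k ih =>
    have hle := (brk_strictMono hb hT k.lt_succ_self).le
    have hπ : (brk b T (k + 1) - brk b T k) / (b ^ k * T) = π := by
      rw [brk_succ_sub hb.ne' T k]
      field_simp
    rw [satG_split hb hT hle le_rfl, ih, integral_satN_segment hb hT hle le_rfl, hπ, sin_pi]
    ring

lemma satG_eq (hb : 1 < b) (hT : 0 < T) {x : ℝ}
    (hx : brk b T n ≤ x) (hx' : x ≤ brk b T (n + 1)) :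
    satG a b T x = (-1) ^ n * a * (b ^ n * T) * sin ((x - brk b T n) / (b ^ n * T)) := by
  rw [satG_split hb hT hx hx', satG_brk hb hT, zero_add, integral_satN_segment hb hT hx hx']

end SegmentFormula

lemma two_div_pi_mul_le_sin {r θ : ℝ} (hr : 0 ≤ r) (hrθ : r ≤ θ) (hrθ' : r ≤ π - θ) :
    2 / π * r ≤ sin θ := by
  rcases le_total θ (π / 2) with hθ | hθ
  · exact (mul_le_mul_of_nonneg_left hrθ (by positivity)).trans
      (mul_le_sin (hr.trans hrθ) hθ)
  · rw [← sin_pi_sub]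
    exact (mul_le_mul_of_nonneg_left hrθ' (by positivity)).trans
      (mul_le_sin (hr.trans hrθ') (by linarith))

lemma le_pow_three_div_mul_of_le_add {b R X Y Z : ℝ} (hb : 1 ≤ b) (hR : 0 ≤ R) (hX : R ≤ X)
    (hY : 4 * R ≤ b * Y) (hZ : X + Y ≤ Z) :
    R ≤ b ^ 3 / (1 + b + b ^ 2 + b ^ 3) * Z := by
  rw [div_mul_eq_mul_div, le_div_iff₀ (by positivity)]
  have h1 : 0 ≤ (3 * b ^ 2 - b - 1) * R := mul_nonneg (by nlinarith) hR
  have h2 := mul_le_mul_of_nonneg_left hX (pow_nonneg (zero_le_one.trans hb) 3)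
  have h3 := mul_le_mul_of_nonneg_left hY (pow_nonneg (zero_le_one.trans hb) 2)
  have h4 := mul_le_mul_of_nonneg_left hZ (pow_nonneg (zero_le_one.trans hb) 3)
  nlinarith

/-- On segment `n`, `a * (χ - brk b T n)` is the amplitude `a T bⁿ` times the phase of `G`, so the
last two conditions keep the phase a margin `π P / (4 a T bⁿ)` away from `0` and from `π`. -/
def WellInside (a b T : ℝ) (n : ℕ) (P χ : ℝ) : Prop :=
  P ≤ a * T * b ^ n ∧ π * P / 4 ≤ a * (χ - brk b T n) ∧ π * P / 4 ≤ a * (brk b T (n + 1) - χ)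

lemma WellInside.pow_four {a b T P χ : ℝ} {k p : ℕ} (ha : 0 ≤ a) (hb : 1 < b) (hT : 0 < T)
    (hP : 0 ≤ P) (hk₁ : 4 * p + 1 ≤ k) (hk₂ : k ≤ 4 * p + 2) (h : WellInside a b T k P χ) :
    WellInside (b ^ 3 / (1 + b + b ^ 2 + b ^ 3) * a) (b ^ 4) ((1 + b + b ^ 2 + b ^ 3) * T)
      p P χ := by
  obtain ⟨hamp, hl, hr⟩ := h
  obtain ⟨k, rfl⟩ : ∃ k', k = k' + 1 := ⟨k - 1, by omega⟩
  have hmono := (brk_strictMono hb hT).monotone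
  have hpow : a * T * b ^ (k + 1) ≤ a * T * b ^ (4 * p + 3) :=
    mul_le_mul_of_nonneg_left (pow_le_pow_right₀ hb.le (by omega)) (by positivity)
  have hpow' : a * T * b ^ (k + 1) ≤ a * T * b ^ (k + 3) :=
    mul_le_mul_of_nonneg_left (pow_le_pow_right₀ hb.le (by omega)) (by positivity)
  refine ⟨?_, ?_, ?_⟩
  · have : b ^ 3 / (1 + b + b ^ 2 + b ^ 3) * a * ((1 + b + b ^ 2 + b ^ 3) * T) * (b ^ 4) ^ p
        = a * T * b ^ (4 * p + 3) := by
      field_simp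
      ring
    linarith
  · rw [brk_pow_four hb, mul_assoc]
    refine le_pow_three_div_mul_of_le_add hb.le (by positivity) hl (Y := a * (T * π * b ^ k)) ?_ ?_
    · have : b * (a * (T * π * b ^ k)) = π * (a * T * b ^ (k + 1)) := by ring
      linarith [mul_le_mul_of_nonneg_left hamp pi_pos.le]
    · rw [← mul_add, ← brk_succ_sub hb.ne']
      exact mul_le_mul_of_nonneg_left (by linarith [hmono (show 4 * p ≤ k by omega)]) ha
  · rw [brk_pow_four hb, mul_assoc]
    refine le_pow_three_div_mul_of_le_add hb.le (by positivity) hr (Y := a * (T * π * b ^ (k + 2))) ?_ ?_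
    · have : b * (a * (T * π * b ^ (k + 2))) = π * (a * T * b ^ (k + 3)) := by ring
      linarith [mul_le_mul_of_nonneg_left (hamp.trans hpow') pi_pos.le]
    · rw [← mul_add, ← brk_succ_sub hb.ne']
      exact mul_le_mul_of_nonneg_left (by linarith [hmono (show k + 3 ≤ 4 * (p + 1) by omega)]) ha

lemma WellInside.half_le_neg_one_pow_mul_satG {a b T P χ : ℝ} {n : ℕ} (ha : 0 < a)
    (hb : 1 < b) (hT : 0 < T) (hP : 0 < P) (h : WellInside a b T n P χ) :
    P / 2 ≤ (-1) ^ n * satG a b T χ := by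
  obtain ⟨-, hl, hr⟩ := h
  have hR : 0 < π * P / 4 := by positivity
  set c := b ^ n * T
  have hc : 0 < c := by positivity
  have hlen : brk b T (n + 1) - brk b T n = π * c := by rw [brk_succ_sub hb.ne']; ring
  have hχl := pos_of_mul_pos_right (hR.trans_le hl) ha.le
  have hχr := pos_of_mul_pos_right (hR.trans_le hr) ha.le
  rw [satG_eq (n := n) hb hT (by linarith) (by linarith)]
  set θ := (χ - brk b T n) / c
  have hθl : θ * (a * c) = a * (χ - brk b T n) := by simp only [θ]; field_simp
  have hθr : (π - θ) * (a * c) = a * (brk b T (n + 1) - χ) := by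
    simp only [θ]; field_simp; linarith
  have hsin := two_div_pi_mul_le_sin (r := π * P / 4 / (a * c)) (θ := θ) (by positivity)
    (by rw [div_le_iff₀ (by positivity), hθl]; exact hl)
    (by rw [div_le_iff₀ (by positivity), hθr]; exact hr)
  have hsq : (-1 : ℝ) ^ n * (-1) ^ n = 1 := by rw [← mul_pow]; norm_num
  calc P / 2 = a * c * (2 / π * (π * P / 4 / (a * c))) := by field_simp; ring
    _ ≤ a * c * sin θ := mul_le_mul_of_nonneg_left hsin (by positivity)
    _ = (-1) ^ n * ((-1) ^ n * a * c * sin θ) := by linear_combination (-(a * c * sin θ)) * hsq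

lemma wellInside_of_mem_Icc {a b T χ : ℝ} {n : ℕ} (ha : 0 ≤ a) (hb : 1 < b)
    (hχ : χ ∈ Icc (brk b T n + T * π * b ^ n / 4) (brk b T (n + 1) - T * π * b ^ n / 4)) :
    WellInside a b T n (a * T * b ^ n) χ := by
  have hlen := brk_succ_sub hb.ne' T n
  refine ⟨le_rfl, ?_, ?_⟩
  · nlinarith [mul_le_mul_of_nonneg_left hχ.1 ha]
  · nlinarith [mul_le_mul_of_nonneg_left hχ.2 ha]

/-- Segments `4 n + 1` and `4 n + 2` of the next finer level lie inside segment `n`, away from both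
of its ends (`brk_pow_four`); the choice between them makes `(-1) ^ nestedSeg σ K j = -σ j`. -/
noncomputable def nestedSeg (σ : ℕ → ℝ) (K : ℕ) : ℕ → ℕ
  | 0 => K
  | j + 1 => 4 * nestedSeg σ K j + if σ (j + 1) = 1 then 1 else 2

section NestedSeg

variable (σ : ℕ → ℝ) (K : ℕ)

lemma le_nestedSeg (j : ℕ) : K ≤ nestedSeg σ K j := by
  induction j with
  | zero => exact le_rfl
  | succ j ih => rw [nestedSeg]; omega

lemma nestedSeg_succ_mem (j : ℕ) :
    4 * nestedSeg σ K j + 1 ≤ nestedSeg σ K (j + 1) ∧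
      nestedSeg σ K (j + 1) ≤ 4 * nestedSeg σ K j + 2 := by
  rw [nestedSeg]
  split <;> omega

lemma neg_one_pow_nestedSeg {j : ℕ} (hσ : σ (j + 1) = 1 ∨ σ (j + 1) = -1) :
    (-1 : ℝ) ^ nestedSeg σ K (j + 1) = -σ (j + 1) := by
  rw [nestedSeg, pow_add, pow_mul]
  rcases hσ with h | h <;> norm_num [h]

end NestedSeg

namespace Chained4Family

variable {L : ℕ} {a b T : ℕ → ℝ}

lemma pos (h : Chained4Family L a b T) {j : ℕ} (hj : 1 ≤ j) (hjL : j ≤ L) :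
    0 < a j ∧ 1 < b j ∧ 0 < T j := by
  induction hjL using Nat.decreasingInduction with
  | self => exact ⟨h.1, h.2.1, h.2.2.1⟩
  | of_succ k hk ih =>
    obtain ⟨ha, hb, hT⟩ := ih (by omega)
    obtain ⟨hbk, hak, hTk⟩ := h.2.2.2 k hj hk
    rw [hak, hbk, hTk]
    exact ⟨by positivity, one_lt_pow₀ hb (by norm_num), by positivity⟩

lemma wellInside (h : Chained4Family L a b T) (σ : ℕ → ℝ) (K : ℕ) {P χ : ℝ} (hP : 0 ≤ P)
    (hL : WellInside (a L) (b L) (T L) (nestedSeg σ K L) P χ) {j : ℕ} (hj : 1 ≤ j)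
    (hjL : j ≤ L) : WellInside (a j) (b j) (T j) (nestedSeg σ K j) P χ := by
  induction hjL using Nat.decreasingInduction with
  | self => exact hL
  | of_succ k hk ih =>
    obtain ⟨ha, hb, hT⟩ := h.pos (j := k + 1) (by omega) hk
    obtain ⟨hbk, hak, hTk⟩ := h.2.2.2 k hj hk
    obtain ⟨hk₁, hk₂⟩ := nestedSeg_succ_mem σ K k
    rw [hak, hbk, hTk]
    exact (ih (by omega)).pow_four ha.le hb hT hP hk₁ hk₂

end Chained4Family

theorem chained_family_signed_common_interval_general (L : ℕ) (a b T : ℕ → ℝ)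
    (h : Chained4Family L a b T) (σ : ℕ → ℝ)
    (hσ : ∀ j, 1 ≤ j → j ≤ L → σ j = 1 ∨ σ j = -1) (K : ℕ) :
    ∃ m : ℕ, K ≤ m ∧ ∃ α β : ℝ, α < β ∧
      Set.Icc α β ⊆ Set.Icc (brk (b L) (T L) (m - 1)) (brk (b L) (T L) m) ∧
      (∀ j, 1 ≤ j → j ≤ L → ∀ χ ∈ Set.Icc α β,
        σ j * satG (a j) (b j) (T j) χ ≤ -(1 / 2) * (a L * T L * (b L) ^ (m - 1))) ∧
      -(1 / 2) * (a L * T L * (b L) ^ (m - 1)) < 0 := by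
  have ⟨haL, hbL, hTL, _⟩ := h
  set N := nestedSeg σ K L
  have hP : 0 < a L * T L * b L ^ N := by positivity
  have hlen := brk_succ_sub hbL.ne' (T L) N
  have hℓ : 0 < T L * π * b L ^ N := by positivity
  refine ⟨N + 1, (le_nestedSeg σ K L).trans N.le_succ, ?_⟩
  rw [Nat.add_sub_cancel]
  refine ⟨brk (b L) (T L) N + T L * π * b L ^ N / 4, brk (b L) (T L) (N + 1) - T L * π * b L ^ N / 4,
    by linarith, fun χ hχ => ⟨by linarith [hχ.1], by linarith [hχ.2]⟩,
    fun j hj hjL χ hχ => ?_, by linarith⟩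
  obtain ⟨haj, hbj, hTj⟩ := h.pos hj hjL
  have hG := ((h.wellInside σ K hP.le (wellInside_of_mem_Icc haL.le hbL hχ) hj hjL
    ).half_le_neg_one_pow_mul_satG haj hbj hTj hP)
  obtain ⟨i, rfl⟩ : ∃ i, j = i + 1 := ⟨j - 1, by omega⟩
  rw [neg_one_pow_nestedSeg σ K (hσ _ hj hjL)] at hG
  linarith

/-- Corollary 3.4: for a 4-chained family of `L` Nussbaum functions and
arbitrary signs, there is a segment `m ≥ K` of the fastest function and a nontrivial
subinterval on which all `σ_j·G_j` are below `−(1/2)·a_L·T_L·b_L^{m−1} < 0`. -/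
theorem chained_family_signed_common_interval (L : ℕ) (hL : 1 ≤ L) (a b T : ℕ → ℝ)
    (h : Chained4Family L a b T) (σ : ℕ → ℝ)
    (hσ : ∀ j, 1 ≤ j → j ≤ L → σ j = 1 ∨ σ j = -1) (K : ℕ) (hK : 1 ≤ K) :
    ∃ m : ℕ, K ≤ m ∧ ∃ α β : ℝ, α < β ∧
      Set.Icc α β ⊆ Set.Icc (brk (b L) (T L) (m - 1)) (brk (b L) (T L) m) ∧
      (∀ j, 1 ≤ j → j ≤ L → ∀ χ ∈ Set.Icc α β,
        σ j * satG (a j) (b j) (T j) χ ≤ -(1 / 2) * (a L * T L * (b L) ^ (m - 1))) ∧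
      -(1 / 2) * (a L * T L * (b L) ^ (m - 1)) < 0 :=
  chained_family_signed_common_interval_general L a b T h σ hσ K
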